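/- arXiv:1405.6229 — 2 statements merged into one kernel-verified Lean document; each statement's English description precedes it below -/
import Mathlib

section
/- Let p ∈ [2, ∞) and let φ, ψ ∈ L^p(μ) for a measure space (X, μ). Then 2^(p-1)(‖φ‖_p^p + ‖ψ‖_p^p) ≥ ‖φ+ψ‖_p^p + ‖φ-ψ‖_p^p. -/
/-!
Pointwise, the parallelogram law gives `a² + b² = 2 (c² + d²)` for `a = ‖x + y‖`, `b = ‖x - y‖`,
`c = ‖x‖`, `d = ‖y‖`. As `p / 2 ≥ 1`, superadditivity and convexity of `t ↦ t ^ (p / 2)` give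
`a ^ p + b ^ p ≤ (a² + b²) ^ (p / 2) = 2 ^ (p / 2) (c² + d²) ^ (p / 2) ≤ 2 ^ (p - 1) (c ^ p + d ^ p)`,
and integrating this over `μ` gives the inequality in `L^p`.
-/

open MeasureTheory NNReal
open scoped ENNReal

theorem NNReal.rpow_add_rpow_le_of_add_eq_two_mul {q : ℝ} (hq : 1 ≤ q) {a b c d : ℝ≥0}
    (h : a + b = 2 * (c + d)) : a ^ q + b ^ q ≤ 2 ^ (2 * q - 1) * (c ^ q + d ^ q) :=
  calc a ^ q + b ^ q ≤ (a + b) ^ q := add_rpow_le_rpow_add a b hq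
    _ = 2 ^ q * (c + d) ^ q := by rw [h, mul_rpow]
    _ ≤ 2 ^ q * (2 ^ (q - 1) * (c ^ q + d ^ q)) := by
      gcongr; exact rpow_add_le_mul_rpow_add_rpow c d hq
    _ = 2 ^ (2 * q - 1) * (c ^ q + d ^ q) := by
      rw [← mul_assoc, ← rpow_add two_ne_zero]; ring_nf

theorem norm_add_rpow_add_norm_sub_rpow_le (𝕜 : Type*) {E : Type*} [RCLike 𝕜]
    [NormedAddCommGroup E] [InnerProductSpace 𝕜 E] {p : ℝ} (hp : 2 ≤ p) (x y : E) :
    ‖x + y‖ ^ p + ‖x - y‖ ^ p ≤ 2 ^ (p - 1) * (‖x‖ ^ p + ‖y‖ ^ p) := by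
  have h := rpow_add_rpow_le_of_add_eq_two_mul (q := p / 2) (by linarith)
    (parallelogram_law_with_nnnorm 𝕜 x y)
  simp only [← rpow_natCast_mul, Nat.cast_ofNat, mul_div_cancel₀ p two_ne_zero] at h
  exact_mod_cast h

theorem Lp.norm_rpow_eq_integral_norm_rpow {α E : Type*} {m : MeasurableSpace α} {μ : Measure α}
    [NormedAddCommGroup E] {p : ℝ≥0∞} (hp₀ : p ≠ 0) (hp : p ≠ ∞) (f : Lp E p μ) :
    ‖f‖ ^ p.toReal = ∫ x, ‖f x‖ ^ p.toReal ∂μ := by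
  rw [Lp.norm_def, (Lp.memLp f).eLpNorm_eq_integral_rpow_norm hp₀ hp,
    ENNReal.toReal_ofReal (by positivity),
    ← Real.rpow_mul (integral_nonneg fun _ => by positivity), inv_mul_cancel₀
    (ENNReal.toReal_ne_zero.2 ⟨hp₀, hp⟩), Real.rpow_one]

theorem Lp.norm_add_rpow_add_norm_sub_rpow_le (𝕜 : Type*) {α E : Type*} {m : MeasurableSpace α}
    {μ : Measure α} [RCLike 𝕜] [NormedAddCommGroup E] [InnerProductSpace 𝕜 E] {p : ℝ≥0∞}
    (hp : 2 ≤ p) (hp_top : p ≠ ∞) (f g : Lp E p μ) :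
    ‖f + g‖ ^ p.toReal + ‖f - g‖ ^ p.toReal
      ≤ 2 ^ (p.toReal - 1) * (‖f‖ ^ p.toReal + ‖g‖ ^ p.toReal) := by
  have hp₀ : p ≠ 0 := (two_pos.trans_le hp).ne'
  have hp_real : 2 ≤ p.toReal := by simpa using ENNReal.toReal_mono hp_top hp
  have hint (h : Lp E p μ) : Integrable (fun x => ‖h x‖ ^ p.toReal) μ :=
    (Lp.memLp h).integrable_norm_rpow hp₀ hp_top
  simp only [Lp.norm_rpow_eq_integral_norm_rpow hp₀ hp_top]
  rw [← integral_add (hint _) (hint _), ← integral_add (hint _) (hint _),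
    ← integral_const_mul]
  refine integral_mono_ae ((hint _).add (hint _)) (((hint _).add (hint _)).const_mul _) ?_
  filter_upwards [Lp.coeFn_add f g, Lp.coeFn_sub f g] with x hadd hsub
  rw [hadd, hsub]
  exact _root_.norm_add_rpow_add_norm_sub_rpow_le 𝕜 hp_real (f x) (g x)

theorem clarkson_first_Lp {X : Type*} [MeasurableSpace X] (μ : Measure X)
    (p : ℝ) (hp : 2 ≤ p) (φ ψ : Lp ℝ (ENNReal.ofReal p) μ) :
    ‖φ + ψ‖ ^ p + ‖φ - ψ‖ ^ p ≤ 2 ^ (p - 1) * (‖φ‖ ^ p + ‖ψ‖ ^ p) := by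
  have h := Lp.norm_add_rpow_add_norm_sub_rpow_le ℝ
    (by simpa using ENNReal.ofReal_le_ofReal hp) ENNReal.ofReal_ne_top φ ψ
  rwa [ENNReal.toReal_ofReal (by linarith)] at h
end

section
/- Let p ∈ (1, 2] and 0 < ε ≤ 2. If φ, ψ ∈ L^p with ‖φ‖ = ‖ψ‖ = 1 and ‖φ - ψ‖ ≥ ε, then ‖(φ+ψ)/2‖ ≤ 1 - δ, where δ ∈ [0,1] is the unique solution of (1 - δ + ε/2)^p + |1 - δ - ε/2|^p = 2. -/
/-!
With `f = (φ + ψ) / 2` and `g = (φ - ψ) / 2`, Hanner's inequality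
`(‖f‖ + ‖g‖) ^ p + |‖f‖ - ‖g‖| ^ p ≤ ‖f + g‖ ^ p + ‖f - g‖ ^ p = 2` says `F ‖f‖ ‖g‖ ≤ 2` for
`F x y = (x + y) ^ p + |x - y| ^ p`. By strict convexity of `x ↦ x ^ p`, `F` is strictly increasing
in each variable on the nonnegative quadrant; as `‖g‖ ≥ ε / 2`, this gives
`F ‖f‖ (ε / 2) ≤ 2 = F (1 - δ) (ε / 2)`, whence `‖f‖ ≤ 1 - δ`.

Hanner's inequality (for `‖g‖ ≤ ‖f‖`) integrates the pointwise bound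
`α r * |a| ^ p + β r * |b| ^ p ≤ |a + b| ^ p + |a - b| ^ p`, valid for every `r ∈ [0, 1]`, where
`α r = (1 + r) ^ (p - 1) + (1 - r) ^ (p - 1)` and
`β r = ((1 + r) ^ (p - 1) - (1 - r) ^ (p - 1)) * r ^ (1 - p)`.
For `|b| ≤ |a|` the left side is largest at `r = |b| / |a|`, where it equals the right side, and
`β ≤ α` covers `|b| > |a|`. With `r = ‖g‖ / ‖f‖` the integrated left side is
`(‖f‖ + ‖g‖) ^ p + (‖f‖ - ‖g‖) ^ p`.
-/

open MeasureTheory Set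

theorem isMaxOn_of_hasDerivAt_nonneg_of_nonpos {f f' : ℝ → ℝ} {D : Set ℝ} {c : ℝ}
    (hD : Convex ℝ D) (hf : ContinuousOn f D) (hf' : ∀ x ∈ interior D, HasDerivAt f (f' x) x)
    (hleft : ∀ x ∈ interior D, x < c → 0 ≤ f' x) (hright : ∀ x ∈ interior D, c < x → f' x ≤ 0)
    (hc : c ∈ D) : IsMaxOn f D c := by
  refine isMaxOn_iff.2 fun x hx => ?_
  rcases le_total x c with hxc | hcx
  · have hmono : MonotoneOn f (D ∩ Iic c) :=
      monotoneOn_of_hasDerivWithinAt_nonneg (hD.inter (convex_Iic c)) (hf.mono inter_subset_left)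
        (fun y hy => (hf' y (interior_mono inter_subset_left hy)).hasDerivWithinAt)
        (fun y hy => by rw [interior_inter, interior_Iic] at hy; exact hleft y hy.1 hy.2)
    exact hmono ⟨hx, hxc⟩ ⟨hc, mem_Iic.2 le_rfl⟩ hxc
  · have hanti : AntitoneOn f (D ∩ Ici c) :=
      antitoneOn_of_hasDerivWithinAt_nonpos (hD.inter (convex_Ici c)) (hf.mono inter_subset_left)
        (fun y hy => (hf' y (interior_mono inter_subset_left hy)).hasDerivWithinAt)
        (fun y hy => by rw [interior_inter, interior_Ici] at hy; exact hright y hy.1 hy.2)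
    exact hanti ⟨hc, mem_Ici.2 le_rfl⟩ ⟨hx, hcx⟩ hcx

theorem StrictConvexOn.strictMonoOn_add_sub {f : ℝ → ℝ} {t : ℝ}
    (hf : StrictConvexOn ℝ (Ici 0) f) :
    StrictMonoOn (fun u => f (t + u) + f (t - u)) (Icc 0 t) := by
  rintro u ⟨hu0, -⟩ v ⟨-, hvt⟩ huv
  have hv : 0 < v := hu0.trans_lt huv
  set a := (v + u) / (2 * v)
  set b := (v - u) / (2 * v)
  have ha : 0 < a := by positivity
  have hb : 0 < b := div_pos (by linarith) (by positivity)
  have hab : a + b = 1 := by simp only [a, b]; field_simp; ring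
  have hmem₁ : t + v ∈ Ici 0 := mem_Ici.2 (by linarith)
  have hmem₂ : t - v ∈ Ici 0 := mem_Ici.2 (by linarith)
  have hne : t + v ≠ t - v := by linarith
  have e₁ : a • (t + v) + b • (t - v) = t + u := by
    simp only [smul_eq_mul, a, b]; field_simp; ring
  have e₂ : b • (t + v) + a • (t - v) = t - u := by
    simp only [smul_eq_mul, a, b]; field_simp; ring
  have h₁ := hf.2 hmem₁ hmem₂ hne ha hb hab
  have h₂ := hf.2 hmem₁ hmem₂ hne hb ha (by linarith)
  rw [e₁] at h₁
  rw [e₂] at h₂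
  simp only [smul_eq_mul] at h₁ h₂
  have hsum : (a + b) * (f (t + v) + f (t - v)) = f (t + v) + f (t - v) := by rw [hab, one_mul]
  dsimp only
  linarith

theorem strictMonoOn_add_rpow_add_abs_sub_rpow {p t : ℝ} (hp : 1 < p) (ht : 0 ≤ t) :
    StrictMonoOn (fun x => (x + t) ^ p + |x - t| ^ p) (Ici 0) := by
  have hp0 : 0 < p := by linarith
  rw [← Icc_union_Ici_eq_Ici ht]
  refine StrictMonoOn.union ?_ ?_ (isGreatest_Icc ht) isLeast_Ici
  · refine (strictConvexOn_rpow hp).strictMonoOn_add_sub.congr fun x hx => ?_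
    dsimp only
    rw [abs_of_nonpos (by linarith [hx.2]), neg_sub, add_comm x]
  · refine StrictMonoOn.add_monotone (fun x hx y hy hxy => ?_) (fun x hx y hy hxy => ?_)
    · exact Real.rpow_lt_rpow (by linarith [mem_Ici.1 hx]) (by linarith) hp0
    · rw [abs_of_nonneg (sub_nonneg.2 hx), abs_of_nonneg (sub_nonneg.2 hy)]
      exact Real.rpow_le_rpow (sub_nonneg.2 hx) (by linarith) hp0.le

theorem abs_add_rpow_add_abs_sub_rpow (a b p : ℝ) :
    |a + b| ^ p + |a - b| ^ p = (|a| + |b|) ^ p + |(|a| - |b|)| ^ p := by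
  rcases le_total 0 a with ha | ha <;> rcases le_total 0 b with hb | hb
  · rw [abs_of_nonneg ha, abs_of_nonneg hb, abs_of_nonneg (add_nonneg ha hb)]
  · rw [abs_of_nonneg ha, abs_of_nonpos hb, abs_of_nonneg (by linarith : 0 ≤ a - b), add_comm,
      sub_neg_eq_add, sub_eq_add_neg]
  · rw [abs_of_nonpos ha, abs_of_nonneg hb, abs_of_nonpos (by linarith : a - b ≤ 0), add_comm,
      ← abs_neg (a + b)]
    ring_nf
  · rw [abs_of_nonpos ha, abs_of_nonpos hb, abs_of_nonpos (by linarith : a + b ≤ 0),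
      ← abs_neg (a - b)]
    ring_nf

theorem exists_mem_Icc_eq_mul_of_le {A B : ℝ} (hB : 0 ≤ B) (hBA : B ≤ A) :
    ∃ c ∈ Icc (0 : ℝ) 1, B = c * A := by
  rcases (hB.trans hBA).eq_or_lt with rfl | hA
  · exact ⟨0, ⟨le_rfl, zero_le_one⟩, by rw [zero_mul]; exact hBA.antisymm hB⟩
  · exact ⟨B / A, ⟨div_nonneg hB hA.le, div_le_one_of_le₀ hBA hA.le⟩,
      (div_mul_cancel₀ _ hA.ne').symm⟩

theorem add_mul_rpow_add_sub_mul_rpow {p A c : ℝ} (hA : 0 ≤ A) (hc : c ∈ Icc (-1) 1) :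
    (A + c * A) ^ p + (A - c * A) ^ p = ((1 + c) ^ p + (1 - c) ^ p) * A ^ p := by
  rw [← one_add_mul, ← one_sub_mul, Real.mul_rpow (by linarith [hc.1]) hA,
    Real.mul_rpow (by linarith [hc.2]) hA, add_mul]

theorem two_le_one_add_rpow_add_one_sub_rpow {p : ℝ} (hp : 1 ≤ p) {c : ℝ} (hc : c ∈ Icc (-1) 1) :
    2 ≤ (1 + c) ^ p + (1 - c) ^ p := by
  have h := (convexOn_rpow hp).2 (mem_Ici.2 (by linarith [hc.1] : (0 : ℝ) ≤ 1 + c))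
    (mem_Ici.2 (by linarith [hc.2] : (0 : ℝ) ≤ 1 - c)) (by norm_num : (0 : ℝ) ≤ 1 / 2)
    (by norm_num : (0 : ℝ) ≤ 1 / 2) (by norm_num)
  simp only [smul_eq_mul] at h
  rw [show 1 / 2 * (1 + c) + 1 / 2 * (1 - c) = (1 : ℝ) by ring, Real.one_rpow] at h
  linarith

theorem one_add_rpow_add_one_sub_rpow_le_two {p : ℝ} (hp0 : 0 ≤ p) (hp1 : p ≤ 1) {c : ℝ}
    (hc : c ∈ Icc (-1) 1) : (1 + c) ^ p + (1 - c) ^ p ≤ 2 := by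
  have h := (Real.concaveOn_rpow hp0 hp1).2 (mem_Ici.2 (by linarith [hc.1] : (0 : ℝ) ≤ 1 + c))
    (mem_Ici.2 (by linarith [hc.2] : (0 : ℝ) ≤ 1 - c)) (by norm_num : (0 : ℝ) ≤ 1 / 2)
    (by norm_num : (0 : ℝ) ≤ 1 / 2) (by norm_num)
  simp only [smul_eq_mul] at h
  rw [show 1 / 2 * (1 + c) + 1 / 2 * (1 - c) = (1 : ℝ) by ring, Real.one_rpow] at h
  linarith

noncomputable def hannerAlpha (p r : ℝ) : ℝ := (1 + r) ^ (p - 1) + (1 - r) ^ (p - 1)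

noncomputable def hannerBeta (p r : ℝ) : ℝ := ((1 + r) ^ (p - 1) - (1 - r) ^ (p - 1)) * r ^ (1 - p)

section HannerWeights

variable {p r : ℝ}

theorem hannerAlpha_zero : hannerAlpha p 0 = 2 := by
  norm_num [hannerAlpha]

theorem hannerBeta_zero : hannerBeta p 0 = 0 := by
  simp [hannerBeta]

theorem hannerAlpha_add_hannerBeta_mul_rpow_self (hp : p ≠ 0) (hr0 : 0 ≤ r) (hr1 : r ≤ 1) :
    hannerAlpha p r + hannerBeta p r * r ^ p = (1 + r) ^ p + (1 - r) ^ p := by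
  have hpow : ∀ x : ℝ, 0 ≤ x → x ^ p = x ^ (p - 1) * x := fun x hx => by
    rw [← Real.rpow_add_one' hx (by simpa using hp), sub_add_cancel]
  have hr : r ^ (1 - p) * r ^ p = r := by
    rw [← Real.rpow_add' hr0 (by simp), sub_add_cancel, Real.rpow_one]
  rw [hannerAlpha, hannerBeta, mul_assoc, hr, hpow _ (by linarith), hpow _ (by linarith)]
  ring

theorem hannerBeta_le_hannerAlpha (hp1 : 1 ≤ p) (hp2 : p ≤ 2) (hr0 : 0 ≤ r) (hr1 : r ≤ 1) :
    hannerBeta p r ≤ hannerAlpha p r := by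
  rcases hr0.eq_or_lt with rfl | hr
  · rw [hannerAlpha_zero, hannerBeta_zero]; norm_num
  have hq0 : 0 ≤ p - 1 := by linarith
  have hq1 : p - 1 ≤ 1 := by linarith
  have hrq : 0 < r ^ (p - 1) := Real.rpow_pos_of_pos hr _
  have hdiff : (1 + r) ^ (p - 1) - (1 - r) ^ (p - 1) ≤ 2 ^ (p - 1) * r ^ (p - 1) := by
    have h := Real.rpow_add_le_add_rpow (by linarith : 0 ≤ 1 - r) (by linarith : 0 ≤ 2 * r)
      hq0 hq1
    rw [show 1 - r + 2 * r = 1 + r by ring, Real.mul_rpow zero_le_two hr0] at h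
    linarith
  have htwo : (2 : ℝ) ^ (p - 1) ≤ hannerAlpha p r := by
    have h := Real.rpow_add_le_add_rpow (by linarith : 0 ≤ 1 + r) (by linarith : 0 ≤ 1 - r)
      hq0 hq1
    rwa [show 1 + r + (1 - r) = (2 : ℝ) by ring] at h
  rw [hannerBeta, show 1 - p = -(p - 1) by ring, Real.rpow_neg hr0, ← div_eq_mul_inv,
    div_le_iff₀ hrq]
  nlinarith

theorem hannerAlpha_le_two (hp1 : 1 ≤ p) (hp2 : p ≤ 2) (hr0 : 0 ≤ r) (hr1 : r ≤ 1) :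
    hannerAlpha p r ≤ 2 :=
  one_add_rpow_add_one_sub_rpow_le_two (by linarith) (by linarith) ⟨by linarith, hr1⟩

theorem continuousOn_hannerAlpha_add_hannerBeta_mul (hp : 1 ≤ p) (c : ℝ) :
    ContinuousOn (fun s => hannerAlpha p s + hannerBeta p s * c) (Ioi 0) := by
  have h₁ : Continuous fun s : ℝ => (1 + s) ^ (p - 1) :=
    (continuous_const.add continuous_id).rpow_const fun _ => Or.inr (by linarith)
  have h₂ : Continuous fun s : ℝ => (1 - s) ^ (p - 1) :=
    (continuous_const.sub continuous_id).rpow_const fun _ => Or.inr (by linarith)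
  have h₃ : ContinuousOn (fun s : ℝ => s ^ (1 - p)) (Ioi 0) :=
    continuousOn_id.rpow_const fun s hs => Or.inl (ne_of_gt hs)
  exact ((h₁.add h₂).continuousOn).add ((((h₁.sub h₂).continuousOn).mul h₃).mul continuousOn_const)

theorem hasDerivAt_hannerAlpha_add_hannerBeta_mul (c : ℝ) {t : ℝ} (ht0 : 0 < t) (ht1 : t < 1) :
    HasDerivAt (fun s => hannerAlpha p s + hannerBeta p s * c)
      ((p - 1) * ((1 - t) ^ (p - 2) - (1 + t) ^ (p - 2)) / t ^ p * (c - t ^ p)) t := by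
  have hplus : 0 < 1 + t := by linarith
  have hminus : 0 < 1 - t := by linarith
  have h₁ : HasDerivAt (fun s : ℝ => (1 + s) ^ (p - 1)) (1 * (p - 1) * (1 + t) ^ (p - 1 - 1)) t :=
    ((hasDerivAt_id t).const_add 1).rpow_const (Or.inl hplus.ne')
  have h₂ : HasDerivAt (fun s : ℝ => (1 - s) ^ (p - 1)) (-1 * (p - 1) * (1 - t) ^ (p - 1 - 1)) t :=
    ((hasDerivAt_id t).const_sub 1).rpow_const (Or.inl hminus.ne')
  have h₃ : HasDerivAt (fun s : ℝ => s ^ (1 - p)) (1 * (1 - p) * t ^ (1 - p - 1)) t :=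
    (hasDerivAt_id t).rpow_const (Or.inl ht0.ne')
  refine ((h₁.add h₂).add (((h₁.sub h₂).mul h₃).mul_const c)).congr_deriv ?_
  have e₁ : (1 + t) ^ (p - 1) = (1 + t) ^ (p - 2) * (1 + t) := by
    rw [← Real.rpow_add_one hplus.ne']; ring_nf
  have e₂ : (1 - t) ^ (p - 1) = (1 - t) ^ (p - 2) * (1 - t) := by
    rw [← Real.rpow_add_one hminus.ne']; ring_nf
  have e₃ : t ^ (1 - p) = t * (t ^ p)⁻¹ := by
    rw [show 1 - p = 1 + -p by ring, Real.rpow_add ht0, Real.rpow_one, Real.rpow_neg ht0.le]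
  have e₄ : t ^ (1 - p - 1) = (t ^ p)⁻¹ := by
    rw [← Real.rpow_neg ht0.le]; ring_nf
  have htp : 0 < t ^ p := Real.rpow_pos_of_pos ht0 p
  simp only [Pi.sub_apply]
  rw [show p - 1 - 1 = p - 2 by ring, e₁, e₂, e₃, e₄]
  field_simp
  ring

theorem hannerAlpha_add_hannerBeta_mul_rpow_le (hp1 : 1 < p) (hp2 : p ≤ 2) {c : ℝ} (hc0 : 0 ≤ c)
    (hc1 : c ≤ 1) (hr0 : 0 ≤ r) (hr1 : r ≤ 1) :
    hannerAlpha p r + hannerBeta p r * c ^ p ≤ (1 + c) ^ p + (1 - c) ^ p := by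
  have hp0 : 0 < p := by linarith
  rcases hr0.eq_or_lt with rfl | hr
  · rw [hannerAlpha_zero, hannerBeta_zero, zero_mul, add_zero]
    exact two_le_one_add_rpow_add_one_sub_rpow hp1.le ⟨by linarith, hc1⟩
  rcases hc0.eq_or_lt with rfl | hc
  · rw [Real.zero_rpow hp0.ne', mul_zero, add_zero, add_zero, sub_zero, Real.one_rpow]
    linarith [hannerAlpha_le_two hp1.le hp2 hr0 hr1]
  have hweight : ∀ t ∈ Ioo (0 : ℝ) 1,
      0 ≤ (p - 1) * ((1 - t) ^ (p - 2) - (1 + t) ^ (p - 2)) / t ^ p :=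
    fun t ⟨ht0, ht1⟩ => div_nonneg (mul_nonneg (by linarith) (sub_nonneg.2
      (Real.rpow_le_rpow_of_nonpos (by linarith) (by linarith) (by linarith))))
      (Real.rpow_nonneg ht0.le p)
  have hmax : IsMaxOn (fun s => hannerAlpha p s + hannerBeta p s * c ^ p) (Ioc 0 1) c := by
    refine isMaxOn_of_hasDerivAt_nonneg_of_nonpos (convex_Ioc 0 1)
      (f' := fun t => (p - 1) * ((1 - t) ^ (p - 2) - (1 + t) ^ (p - 2)) / t ^ p * (c ^ p - t ^ p))
      ((continuousOn_hannerAlpha_add_hannerBeta_mul hp1.le _).mono Ioc_subset_Ioi_self)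
      (fun t ht => ?_) (fun t ht htc => ?_) (fun t ht hct => ?_) ⟨hc, hc1⟩ <;>
      rw [interior_Ioc] at ht
    · exact hasDerivAt_hannerAlpha_add_hannerBeta_mul _ ht.1 ht.2
    · exact mul_nonneg (hweight t ht)
        (sub_nonneg.2 (Real.rpow_le_rpow ht.1.le htc.le hp0.le))
    · exact mul_nonpos_of_nonneg_of_nonpos (hweight t ht)
        (sub_nonpos.2 (Real.rpow_le_rpow hc0 hct.le hp0.le))
  calc hannerAlpha p r + hannerBeta p r * c ^ p
      ≤ hannerAlpha p c + hannerBeta p c * c ^ p := isMaxOn_iff.1 hmax r ⟨hr, hr1⟩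
    _ = (1 + c) ^ p + (1 - c) ^ p := hannerAlpha_add_hannerBeta_mul_rpow_self hp0.ne' hc0 hc1

theorem hannerAlpha_mul_rpow_add_hannerBeta_mul_rpow_self {A : ℝ} (hp : p ≠ 0) (hA : 0 ≤ A)
    (hr0 : 0 ≤ r) (hr1 : r ≤ 1) :
    hannerAlpha p r * A ^ p + hannerBeta p r * (r * A) ^ p = (A + r * A) ^ p + (A - r * A) ^ p := by
  rw [add_mul_rpow_add_sub_mul_rpow hA ⟨by linarith, hr1⟩,
    ← hannerAlpha_add_hannerBeta_mul_rpow_self hp hr0 hr1, Real.mul_rpow hr0 hA]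
  ring

theorem hannerAlpha_mul_rpow_add_hannerBeta_mul_rpow_le (hp1 : 1 < p) (hp2 : p ≤ 2)
    (hr0 : 0 ≤ r) (hr1 : r ≤ 1) {A B : ℝ} (hB : 0 ≤ B) (hBA : B ≤ A) :
    hannerAlpha p r * A ^ p + hannerBeta p r * B ^ p ≤ (A + B) ^ p + (A - B) ^ p := by
  have hA := hB.trans hBA
  obtain ⟨c, ⟨hc0, hc1⟩, rfl⟩ := exists_mem_Icc_eq_mul_of_le hB hBA
  rw [add_mul_rpow_add_sub_mul_rpow hA ⟨by linarith, hc1⟩, Real.mul_rpow hc0 hA]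
  calc hannerAlpha p r * A ^ p + hannerBeta p r * (c ^ p * A ^ p)
      = (hannerAlpha p r + hannerBeta p r * c ^ p) * A ^ p := by ring
    _ ≤ ((1 + c) ^ p + (1 - c) ^ p) * A ^ p :=
      mul_le_mul_of_nonneg_right (hannerAlpha_add_hannerBeta_mul_rpow_le hp1 hp2 hc0 hc1 hr0 hr1)
        (Real.rpow_nonneg hA p)

theorem hannerAlpha_mul_abs_rpow_add_hannerBeta_mul_abs_rpow_le (hp1 : 1 < p) (hp2 : p ≤ 2)
    (hr0 : 0 ≤ r) (hr1 : r ≤ 1) (a b : ℝ) :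
    hannerAlpha p r * |a| ^ p + hannerBeta p r * |b| ^ p ≤ |a + b| ^ p + |a - b| ^ p := by
  rw [abs_add_rpow_add_abs_sub_rpow]
  rcases le_total |b| |a| with hba | hab
  · rw [abs_of_nonneg (sub_nonneg.2 hba)]
    exact hannerAlpha_mul_rpow_add_hannerBeta_mul_rpow_le hp1 hp2 hr0 hr1 (abs_nonneg b) hba
  · rw [abs_of_nonpos (sub_nonpos.2 hab), neg_sub, add_comm |a|]
    have hβα := hannerBeta_le_hannerAlpha hp1.le hp2 hr0 hr1
    have hpow : |a| ^ p ≤ |b| ^ p := Real.rpow_le_rpow (abs_nonneg a) hab (by linarith)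
    calc hannerAlpha p r * |a| ^ p + hannerBeta p r * |b| ^ p
        ≤ hannerAlpha p r * |b| ^ p + hannerBeta p r * |a| ^ p := by
          nlinarith [mul_nonneg (sub_nonneg.2 hβα) (sub_nonneg.2 hpow)]
      _ ≤ (|b| + |a|) ^ p + (|b| - |a|) ^ p :=
        hannerAlpha_mul_rpow_add_hannerBeta_mul_rpow_le hp1 hp2 hr0 hr1 (abs_nonneg a) hab

end HannerWeights

namespace MeasureTheory.Lp

variable {X : Type*} [MeasurableSpace X] {μ : Measure X} {p : ℝ}

theorem norm_rpow_eq_integral_of_ae_eq (hp : 0 < p) {f : Lp ℝ (ENNReal.ofReal p) μ} {F : X → ℝ}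
    (hF : f =ᵐ[μ] F) : ‖f‖ ^ p = ∫ x, |F x| ^ p ∂μ := by
  have hp0 : ENNReal.ofReal p ≠ 0 := ENNReal.ofReal_ne_zero_iff.2 hp
  have hint : 0 ≤ ∫ x, |F x| ^ p ∂μ := integral_nonneg fun x => Real.rpow_nonneg (abs_nonneg _) p
  rw [Lp.norm_def, eLpNorm_congr_ae hF,
    ((Lp.memLp f).ae_eq hF).eLpNorm_eq_integral_rpow_norm hp0 ENNReal.ofReal_ne_top,
    ENNReal.toReal_ofReal hp.le, ENNReal.toReal_ofReal (Real.rpow_nonneg (by simpa using hint) _)]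
  simp only [Real.norm_eq_abs]
  exact Real.rpow_inv_rpow hint hp.ne'

theorem integrable_abs_rpow_of_ae_eq (hp : 0 < p) {f : Lp ℝ (ENNReal.ofReal p) μ} {F : X → ℝ}
    (hF : f =ᵐ[μ] F) : Integrable (fun x => |F x| ^ p) μ := by
  simpa [ENNReal.toReal_ofReal hp.le] using ((Lp.memLp f).ae_eq hF).integrable_norm_rpow
    (ENNReal.ofReal_ne_zero_iff.2 hp) ENNReal.ofReal_ne_top

theorem hanner_of_norm_le (hp1 : 1 < p) (hp2 : p ≤ 2) {f g : Lp ℝ (ENNReal.ofReal p) μ}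
    (hgf : ‖g‖ ≤ ‖f‖) : (‖f‖ + ‖g‖) ^ p + (‖f‖ - ‖g‖) ^ p ≤ ‖f + g‖ ^ p + ‖f - g‖ ^ p := by
  have : Fact (1 ≤ ENNReal.ofReal p) := ⟨ENNReal.one_le_ofReal.2 hp1.le⟩
  have hp : 0 < p := by linarith
  obtain ⟨r, ⟨hr0, hr1⟩, hgr⟩ := exists_mem_Icc_eq_mul_of_le (norm_nonneg g) hgf
  have hf := integrable_abs_rpow_of_ae_eq hp (ae_eq_refl f)
  have hg := integrable_abs_rpow_of_ae_eq hp (ae_eq_refl g)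
  have hadd : Integrable (fun x => |f x + g x| ^ p) μ :=
    integrable_abs_rpow_of_ae_eq hp (Lp.coeFn_add f g)
  have hsub : Integrable (fun x => |f x - g x| ^ p) μ :=
    integrable_abs_rpow_of_ae_eq hp (Lp.coeFn_sub f g)
  calc (‖f‖ + ‖g‖) ^ p + (‖f‖ - ‖g‖) ^ p
      = hannerAlpha p r * ‖f‖ ^ p + hannerBeta p r * ‖g‖ ^ p := by
        rw [hgr, hannerAlpha_mul_rpow_add_hannerBeta_mul_rpow_self hp.ne' (norm_nonneg f) hr0 hr1]
    _ = ∫ x, hannerAlpha p r * |f x| ^ p + hannerBeta p r * |g x| ^ p ∂μ := by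
        rw [integral_add (hf.const_mul _) (hg.const_mul _), integral_const_mul, integral_const_mul,
          norm_rpow_eq_integral_of_ae_eq hp (ae_eq_refl f),
          norm_rpow_eq_integral_of_ae_eq hp (ae_eq_refl g)]
    _ ≤ ∫ x, |f x + g x| ^ p + |f x - g x| ^ p ∂μ :=
        integral_mono ((hf.const_mul _).add (hg.const_mul _)) (hadd.add hsub) fun x =>
          hannerAlpha_mul_abs_rpow_add_hannerBeta_mul_abs_rpow_le hp1 hp2 hr0 hr1 (f x) (g x)
    _ = ‖f + g‖ ^ p + ‖f - g‖ ^ p := by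
        rw [norm_rpow_eq_integral_of_ae_eq hp (Lp.coeFn_add f g),
          norm_rpow_eq_integral_of_ae_eq hp (Lp.coeFn_sub f g)]
        exact integral_add hadd hsub

theorem hanner (hp1 : 1 < p) (hp2 : p ≤ 2) (f g : Lp ℝ (ENNReal.ofReal p) μ) :
    (‖f‖ + ‖g‖) ^ p + |‖f‖ - ‖g‖| ^ p ≤ ‖f + g‖ ^ p + ‖f - g‖ ^ p := by
  have : Fact (1 ≤ ENNReal.ofReal p) := ⟨ENNReal.one_le_ofReal.2 hp1.le⟩
  rcases le_total ‖g‖ ‖f‖ with hgf | hfg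
  · rw [abs_of_nonneg (sub_nonneg.2 hgf)]
    exact hanner_of_norm_le hp1 hp2 hgf
  · rw [abs_sub_comm, abs_of_nonneg (sub_nonneg.2 hfg), add_comm ‖f‖, add_comm f,
      ← norm_neg (f - g), neg_sub]
    exact hanner_of_norm_le hp1 hp2 hfg

end MeasureTheory.Lp

theorem uniform_convexity_le_two_general {X : Type*} [MeasurableSpace X] (μ : Measure X)
    (p : ℝ) (hp1 : 1 < p) (hp2 : p ≤ 2) (ε : ℝ) (hε0 : 0 < ε)
    (δ : ℝ) (hδ : δ ∈ Set.Icc (0 : ℝ) 1)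
    (hδeq : (1 - δ + ε / 2) ^ p + |1 - δ - ε / 2| ^ p = 2)
    (φ ψ : Lp ℝ (ENNReal.ofReal p) μ)
    (hφ : ‖φ‖ = 1) (hψ : ‖ψ‖ = 1) (hd : ε ≤ ‖φ - ψ‖) :
    ‖(2 : ℝ)⁻¹ • (φ + ψ)‖ ≤ 1 - δ := by
  have : Fact (1 ≤ ENNReal.ofReal p) := ⟨ENNReal.one_le_ofReal.2 hp1.le⟩
  set f := (2 : ℝ)⁻¹ • (φ + ψ)
  set g := (2 : ℝ)⁻¹ • (φ - ψ)
  have hε : 0 ≤ ε / 2 := by positivity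
  have hg : ε / 2 ≤ ‖g‖ := by
    rw [norm_smul, Real.norm_eq_abs, abs_of_pos (by norm_num : (0 : ℝ) < 2⁻¹)]
    linarith
  have hhanner : (‖f‖ + ‖g‖) ^ p + |‖f‖ - ‖g‖| ^ p ≤ 2 := by
    have h := Lp.hanner hp1 hp2 f g
    rwa [show f + g = φ by module, show f - g = ψ by module, hφ, hψ, Real.one_rpow,
      one_add_one_eq_two] at h
  have hmono : (‖f‖ + ε / 2) ^ p + |‖f‖ - ε / 2| ^ p ≤ (‖f‖ + ‖g‖) ^ p + |‖f‖ - ‖g‖| ^ p := by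
    have h := (strictMonoOn_add_rpow_add_abs_sub_rpow hp1 (norm_nonneg f)).monotoneOn
      (mem_Ici.2 hε) (mem_Ici.2 (norm_nonneg g)) hg
    rwa [add_comm (ε / 2), abs_sub_comm (ε / 2), add_comm ‖g‖, abs_sub_comm ‖g‖] at h
  refine ((strictMonoOn_add_rpow_add_abs_sub_rpow hp1 hε).le_iff_le (mem_Ici.2 (norm_nonneg f))
    (mem_Ici.2 (by linarith [hδ.2]))).1 ?_
  rw [hδeq]
  exact hmono.trans hhanner

theorem uniform_convexity_le_two {X : Type*} [MeasurableSpace X] (μ : Measure X)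
    (p : ℝ) (hp1 : 1 < p) (hp2 : p ≤ 2) (ε : ℝ) (hε0 : 0 < ε) (hε2 : ε ≤ 2)
    (δ : ℝ) (hδ : δ ∈ Set.Icc (0 : ℝ) 1)
    (hδeq : (1 - δ + ε / 2) ^ p + |1 - δ - ε / 2| ^ p = 2)
    (φ ψ : Lp ℝ (ENNReal.ofReal p) μ)
    (hφ : ‖φ‖ = 1) (hψ : ‖ψ‖ = 1) (hd : ε ≤ ‖φ - ψ‖) :
    ‖(2 : ℝ)⁻¹ • (φ + ψ)‖ ≤ 1 - δ :=
  uniform_convexity_le_two_general μ p hp1 hp2 ε hε0 δ hδ hδeq φ ψ hφ hψ hd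
end
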